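/- Let C, A, T be three qubits with A prepared in |0⟩. Performing the three-body X-parity measurement projector (I + s·X⊗X⊗X)/2 on (C,A,T) for outcome s, then measuring C in the Z basis, yields on input |ψ⟩_C ⊗ |0⟩_A ⊗ |φ⟩_T a state on (A,T) equal, up to a nonzero scalar and a Pauli correction determined by the outcomes, to CNOT applied to |ψ⟩⊗|φ⟩ (with A carrying the control). Hence this lattice-surgery circuit implements a CNOT with the control teleported from C to A. -/

import Mathlib

open Matrix Kronecker

noncomputable section

abbrev Q := Fin 2
abbrev MQ := Matrix Q Q ℂ

/-- Pauli X matrix. -/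
def PX : MQ := !![0, 1; 1, 0]
/-- Pauli Z matrix. -/
def PZ : MQ := !![1, 0; 0, -1]
/-- Hadamard matrix. -/
def Had : MQ := (((Real.sqrt 2 : ℝ) : ℂ))⁻¹ • !![1, 1; 1, -1]

def ket0 : Q → ℂ := ![1, 0]
def ket1 : Q → ℂ := ![0, 1]
/-- |+⟩ = (|0⟩+|1⟩)/√2 -/
def ketP : Q → ℂ := (((Real.sqrt 2 : ℝ) : ℂ))⁻¹ • ![1, 1]

/-- Tensor product of two single-qubit states. -/
def tp2 (u v : Q → ℂ) : Q × Q → ℂ := fun p => u p.1 * v p.2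
/-- Tensor product of three single-qubit states, grouped ((1,2),3). -/
def tp3 (u v w : Q → ℂ) : (Q × Q) × Q → ℂ := fun p => u p.1.1 * v p.1.2 * w p.2

/-- Standard CNOT, first factor control, second target. -/
def CNOT2 : Matrix (Q × Q) (Q × Q) ℂ :=
  Matrix.of fun p q => if p.1 = q.1 ∧ p.2 = q.2 + q.1 then 1 else 0

/-- Single-qubit Pauli corrections: I, X, Z, XZ. -/
def IsPauli (P : MQ) : Prop := P = 1 ∨ P = PX ∨ P = PZ ∨ P = PX * PZ

/-- Z-copy spider (green) as a 4×2 matrix. -/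
def dZm : Matrix (Q × Q) Q ℂ := Matrix.of fun p b => if p.1 = b ∧ p.2 = b then 1 else 0
/-- Z-merge spider (green) as a 2×4 matrix. -/
def mZm : Matrix Q (Q × Q) ℂ := Matrix.of fun b p => if p.1 = b ∧ p.2 = b then 1 else 0
/-- X-copy spider (red): δ_X|±⟩=|±±⟩. -/
def dXm : Matrix (Q × Q) Q ℂ :=
  Matrix.of fun p b => if p.1 + p.2 = b then (((Real.sqrt 2 : ℝ) : ℂ))⁻¹ else 0
/-- X-merge spider (red): μ_X|±±⟩=|±⟩. -/
def mXm : Matrix Q (Q × Q) ℂ :=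
  Matrix.of fun b p => if p.1 + p.2 = b then (((Real.sqrt 2 : ℝ) : ℂ))⁻¹ else 0
/-- Swap of the middle two wires of four, grouped ((1,2),(3,4)). -/
def Smid : Matrix ((Q × Q) × (Q × Q)) ((Q × Q) × (Q × Q)) ℂ :=
  Matrix.of fun p q =>
    if p.1.1 = q.1.1 ∧ p.1.2 = q.2.1 ∧ p.2.1 = q.1.2 ∧ p.2.2 = q.2.2 then 1 else 0

/-- ZZ-parity projector with sign s on wires (C,A) of (C,A,T). -/
def PZZCA (s : ℂ) : Matrix ((Q × Q) × Q) ((Q × Q) × Q) ℂ :=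
  (2:ℂ)⁻¹ • (1 + s • ((PZ ⊗ₖ PZ) ⊗ₖ (1 : MQ)))
/-- XX-parity projector with sign s on wires (A,T) of (C,A,T). -/
def PXXAT (s : ℂ) : Matrix ((Q × Q) × Q) ((Q × Q) × Q) ℂ :=
  (2:ℂ)⁻¹ • (1 + s • (((1 : MQ) ⊗ₖ PX) ⊗ₖ PX))

/-- Three-body X-parity projector with sign s on (C,A,T). -/
def P3X (s : ℂ) : Matrix ((Q × Q) × Q) ((Q × Q) × Q) ℂ :=
  (2:ℂ)⁻¹ • (1 + s • ((PX ⊗ₖ PX) ⊗ₖ PX))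

/-!
The projector gives `½(|ψ,0,φ⟩ + s|Xψ,1,Xφ⟩)`, so reading `b` on `C` leaves
`½(ψ(b)|0⟩|φ⟩ + s ψ(b+1)|1⟩|Xφ⟩)` on `(A,T)`, while `CNOT|ψ,φ⟩ = ψ(0)|0⟩|φ⟩ + ψ(1)|1⟩|Xφ⟩`.
For `b = 1` the correction `X ⊗ X` swaps the two branches, and for `s = -1` a `Z` on `A`
fixes the relative sign.
-/

theorem kronecker_mulVec_mul {R l m n p : Type*} [CommSemiring R] [Fintype m] [Fintype p]
    (A : Matrix l m R) (B : Matrix n p R) (x : m → R) (y : p → R) :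
    (A ⊗ₖ B) *ᵥ (fun q => x q.1 * y q.2) = fun q => (A *ᵥ x) q.1 * (B *ᵥ y) q.2 := by
  ext ⟨i, j⟩
  simp only [mulVec, dotProduct, kroneckerMap_apply, Fintype.sum_prod_type, Finset.sum_mul_sum]
  exact Finset.sum_congr rfl fun _ _ => Finset.sum_congr rfl fun _ _ => by ring

theorem kronecker_mulVec_tp2 (A B : MQ) (u v : Q → ℂ) :
    (A ⊗ₖ B) *ᵥ tp2 u v = tp2 (A *ᵥ u) (B *ᵥ v) :=
  kronecker_mulVec_mul A B u v

theorem kronecker_mulVec_tp3 (A B C : MQ) (u v w : Q → ℂ) :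
    (A ⊗ₖ B ⊗ₖ C) *ᵥ tp3 u v w = tp3 (A *ᵥ u) (B *ᵥ v) (C *ᵥ w) := by
  have h : tp3 u v w = fun q => tp2 u v q.1 * w q.2 := rfl
  rw [h, kronecker_mulVec_mul, kronecker_mulVec_tp2]
  rfl

theorem tp2_smul_left (c : ℂ) (u v : Q → ℂ) : tp2 (c • u) v = c • tp2 u v := by
  ext p
  simp only [tp2, Pi.smul_apply, smul_eq_mul, mul_assoc]

theorem PX_mulVec_apply (v : Q → ℂ) (i : Q) : (PX *ᵥ v) i = v (i + 1) := by
  fin_cases i <;> simp [PX, mulVec, dotProduct, Fin.sum_univ_two]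

theorem PX_mul_PX : PX * PX = 1 := by
  ext i j; fin_cases i <;> fin_cases j <;> simp [PX]

theorem PX_mulVec_PX_mulVec (v : Q → ℂ) : PX *ᵥ PX *ᵥ v = v := by
  rw [mulVec_mulVec, PX_mul_PX, one_mulVec]

theorem PX_mulVec_ket0 : PX *ᵥ ket0 = ket1 := by
  ext i; fin_cases i <;> simp [PX_mulVec_apply, ket0, ket1]

theorem PX_mulVec_ket1 : PX *ᵥ ket1 = ket0 := by
  ext i; fin_cases i <;> simp [PX_mulVec_apply, ket0, ket1]

theorem PZ_mulVec_ket0 : PZ *ᵥ ket0 = ket0 := by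
  ext i; fin_cases i <;> simp [PZ, ket0, mulVec, dotProduct]

theorem PZ_mulVec_ket1 : PZ *ᵥ ket1 = (-1 : ℂ) • ket1 := by
  ext i; fin_cases i <;> simp [PZ, ket1, mulVec, dotProduct]

theorem CNOT2_mulVec_tp2 (ψ φ : Q → ℂ) :
    CNOT2 *ᵥ tp2 ψ φ = ψ 0 • tp2 ket0 φ + ψ 1 • tp2 ket1 (PX *ᵥ φ) := by
  ext ⟨a, t⟩
  simp only [Pi.add_apply, Pi.smul_apply, tp2, PX_mulVec_apply]
  fin_cases a <;> fin_cases t <;>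
    simp [CNOT2, tp2, ket0, ket1, mulVec, dotProduct, Fintype.sum_prod_type]

theorem P3X_mulVec (s : ℂ) (v : (Q × Q) × Q → ℂ) :
    P3X s *ᵥ v = (2⁻¹ : ℂ) • (v + s • ((PX ⊗ₖ PX ⊗ₖ PX) *ᵥ v)) := by
  rw [P3X, smul_mulVec, add_mulVec, one_mulVec, smul_mulVec]

theorem P3X_mulVec_tp3_ket0_outcome (s : ℂ) (b : Q) (ψ φ : Q → ℂ) :
    (fun p : Q × Q => (P3X s *ᵥ tp3 ψ ket0 φ) ((b, p.1), p.2)) =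
      (2⁻¹ * ψ b) • tp2 ket0 φ + (2⁻¹ * s * ψ (b + 1)) • tp2 ket1 (PX *ᵥ φ) := by
  rw [P3X_mulVec, kronecker_mulVec_tp3, PX_mulVec_ket0]
  ext p
  simp only [tp3, tp2, PX_mulVec_apply, Pi.add_apply, Pi.smul_apply, smul_eq_mul]
  ring

theorem kronecker_mul_CNOT2_mulVec_tp2 (P T : MQ) (ψ φ : Q → ℂ) :
    ((P ⊗ₖ T) * CNOT2) *ᵥ tp2 ψ φ =
      ψ 0 • tp2 (P *ᵥ ket0) (T *ᵥ φ) + ψ 1 • tp2 (P *ᵥ ket1) (T *ᵥ PX *ᵥ φ) := by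
  rw [← mulVec_mulVec, CNOT2_mulVec_tp2, mulVec_add, mulVec_smul, mulVec_smul,
    kronecker_mulVec_tp2, kronecker_mulVec_tp2]

/-- The three-body X measurement on (C,A,T) with A prepared in |0⟩, followed by
a Z measurement of C with outcome b, yields on (A,T) a nonzero scalar multiple
of a Pauli correction times CNOT (A carrying the control). -/
theorem stmt3 :
    ∀ s : ℂ, (s = 1 ∨ s = -1) → ∀ b : Q,
      ∃ c : ℂ, c ≠ 0 ∧ ∃ P T : MQ, IsPauli P ∧ IsPauli T ∧
        ∀ ψ φ : Q → ℂ,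
          (fun p : Q × Q => ((P3X s).mulVec (tp3 ψ ket0 φ)) ((b, p.1), p.2))
          = c • (((P ⊗ₖ T) * CNOT2).mulVec (tp2 ψ φ)) := by
  intro s hs
  rcases hs with rfl | rfl <;> refine Fin.forall_fin_two.2 ⟨?_, ?_⟩
  · refine ⟨2⁻¹, by norm_num, 1, 1, .inl rfl, .inl rfl, fun ψ φ => ?_⟩
    rw [P3X_mulVec_tp3_ket0_outcome, kronecker_mul_CNOT2_mulVec_tp2]
    simp only [one_mulVec, zero_add]
    module
  · refine ⟨2⁻¹, by norm_num, PX, PX, .inr (.inl rfl), .inr (.inl rfl), fun ψ φ => ?_⟩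
    rw [P3X_mulVec_tp3_ket0_outcome, kronecker_mul_CNOT2_mulVec_tp2]
    simp only [PX_mulVec_ket0, PX_mulVec_ket1, PX_mulVec_PX_mulVec, Fin.reduceAdd]
    module
  · refine ⟨2⁻¹, by norm_num, PZ, 1, .inr (.inr (.inl rfl)), .inl rfl, fun ψ φ => ?_⟩
    rw [P3X_mulVec_tp3_ket0_outcome, kronecker_mul_CNOT2_mulVec_tp2]
    simp only [one_mulVec, PZ_mulVec_ket0, PZ_mulVec_ket1, tp2_smul_left, zero_add]
    module
  · refine ⟨-2⁻¹, by norm_num, PX * PZ, PX, .inr (.inr (.inr rfl)), .inr (.inl rfl), fun ψ φ => ?_⟩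
    rw [P3X_mulVec_tp3_ket0_outcome, kronecker_mul_CNOT2_mulVec_tp2]
    simp only [← mulVec_mulVec, PZ_mulVec_ket0, PZ_mulVec_ket1, mulVec_smul, PX_mulVec_ket0,
      PX_mulVec_ket1, PX_mulVec_PX_mulVec, tp2_smul_left, Fin.reduceAdd]
    module
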